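/- arXiv:2304.11374 — 3 statements merged into one kernel-verified Lean document; each statement's English description precedes it below -/
import Mathlib

section
/- (Theorem 2, pathwise loosened T-slot drift-plus-penalty bound.) Let Q, C, A : ℕ → ℝ with Q(0) ≥ 0, let C_max ≥ R_bug ≥ 0, V ≥ 0, and suppose Q(τ+1) = max(Q(τ) + C(τ) − R_bug, 0) and 0 ≤ C(τ) ≤ C_max for all τ. Set B₁ = (C_max² + R_bug²)/2 and B₂ = B₁ + C_max²·(T−1)/2. Then for all t ∈ ℕ and T ≥ 1: (1/2)·Q(t+T)² − (1/2)·Q(t)² + V·∑_{τ=t}^{t+T−1} A(τ) ≤ B₂·T + V·∑_{τ=t}^{t+T−1} A(τ) + ∑_{τ=t}^{t+T−1} Q(t)·(C(τ) − R_bug). -/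
/-- Theorem 2 (pathwise loosened T-slot drift-plus-penalty bound), with constant
`B₂ = B₁ + C_max²·(T-1)/2` where `B₁ = (C_max² + R_bug²)/2`. -/
theorem theorem2_pathwise (Q C A : ℕ → ℝ) (Rbug Cmax V : ℝ)
    (hQ0 : 0 ≤ Q 0) (h : Rbug ≤ Cmax) (hRbug : 0 ≤ Rbug) (hV : 0 ≤ V)
    (hQ : ∀ τ, Q (τ + 1) = max (Q τ + C τ - Rbug) 0)
    (hC : ∀ τ, 0 ≤ C τ ∧ C τ ≤ Cmax) :
    ∀ (t T : ℕ), 1 ≤ T →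
      (1/2) * (Q (t + T))^2 - (1/2) * (Q t)^2 + V * ∑ τ ∈ Finset.Ico t (t + T), A τ ≤
        ((Cmax^2 + Rbug^2) / 2 + Cmax^2 * ((T : ℝ) - 1) / 2) * T
          + V * ∑ τ ∈ Finset.Ico t (t + T), A τ
          + ∑ τ ∈ Finset.Ico t (t + T), Q t * (C τ - Rbug) := by
  intro t T hT
  have hCmax : 0 ≤ Cmax := hRbug.trans h
  have hQnn : ∀ τ, 0 ≤ Q τ := by
    intro τ
    cases τ with
    | zero => exact hQ0
    | succ n => rw [hQ n]; exact le_max_right _ _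
  have hup : ∀ k : ℕ, Q (t + k) ≤ Q t + k * Cmax := by
    intro k; induction k with
    | zero => simp
    | succ n ih =>
      rw [show t + (n + 1) = (t + n) + 1 from rfl, hQ (t + n)]
      have h2 := (hC (t + n)).2
      push_cast
      apply max_le
      · nlinarith
      · nlinarith [hQnn t, Nat.cast_nonneg (α := ℝ) n]
  have hdown : ∀ k : ℕ, Q t - k * Rbug ≤ Q (t + k) := by
    intro k; induction k with
    | zero => simp
    | succ n ih =>
      rw [show t + (n + 1) = (t + n) + 1 from rfl, hQ (t + n)]
      have h1 := (hC (t + n)).1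
      refine le_trans ?_ (le_max_left _ _)
      push_cast
      nlinarith
  have hstep : ∀ k : ℕ, (1/2) * (Q (t + k + 1))^2 - (1/2) * (Q (t + k))^2 ≤
      (Cmax^2 + Rbug^2) / 2 + Q t * (C (t + k) - Rbug) + (k : ℝ) * Cmax^2 := by
    intro k
    have h1 : (Q (t + k + 1))^2 ≤ (Q (t + k) + C (t + k) - Rbug)^2 := by
      rw [hQ (t + k)]
      rcases le_or_gt (Q (t + k) + C (t + k) - Rbug) 0 with hx | hx
      · rw [max_eq_right hx]
        simpa using sq_nonneg (Q (t + k) + C (t + k) - Rbug)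
      · rw [max_eq_left hx.le]
    have hC1 := (hC (t + k)).1
    have hC2 := (hC (t + k)).2
    have hq := hQnn (t + k)
    have hcross : Q (t + k) * (C (t + k) - Rbug) ≤
        Q t * (C (t + k) - Rbug) + (k : ℝ) * Cmax^2 := by
      have knn : (0:ℝ) ≤ (k : ℝ) := Nat.cast_nonneg k
      rcases le_or_gt Rbug (C (t + k)) with hcr | hcr
      · have h5 := mul_le_mul_of_nonneg_right (hup k) (sub_nonneg.2 hcr)
        have h6 : 0 ≤ (k : ℝ) * Cmax * (Cmax - (C (t + k) - Rbug)) :=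
          mul_nonneg (mul_nonneg knn hCmax) (by linarith)
        nlinarith [h5, h6]
      · have h5 := mul_le_mul_of_nonneg_right (hdown k) (sub_pos.2 hcr).le
        have a1 : (k : ℝ) * Rbug * (Rbug - C (t + k)) ≤ (k : ℝ) * Rbug * Cmax :=
          mul_le_mul_of_nonneg_left (by linarith) (mul_nonneg knn hRbug)
        have a2 : (k : ℝ) * Rbug * Cmax ≤ (k : ℝ) * Cmax * Cmax :=
          mul_le_mul_of_nonneg_right (mul_le_mul_of_nonneg_left h knn) hCmax
        nlinarith [h5, a1, a2]
    nlinarith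
  rw [Finset.sum_Ico_eq_sum_range, Finset.sum_Ico_eq_sum_range]
  simp only [add_tsub_cancel_left]
  have htel : (1/2) * (Q (t + T))^2 - (1/2) * (Q t)^2 =
      ∑ k ∈ Finset.range T, ((1/2) * (Q (t + k + 1))^2 - (1/2) * (Q (t + k))^2) := by
    have h0 := Finset.sum_range_sub (fun k => (1/2) * (Q (t + k))^2) T
    simp only [← add_assoc, add_zero] at h0
    exact h0.symm
  have hsum : ∑ k ∈ Finset.range T, ((1/2) * (Q (t + k + 1))^2 - (1/2) * (Q (t + k))^2) ≤
      ∑ k ∈ Finset.range T,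
        ((Cmax^2 + Rbug^2) / 2 + Q t * (C (t + k) - Rbug) + (k : ℝ) * Cmax^2) :=
    Finset.sum_le_sum fun k _ => hstep k
  have hgauss : ∀ n : ℕ, ∑ k ∈ Finset.range n, (k : ℝ) = (n : ℝ) * ((n : ℝ) - 1) / 2 := by
    intro n
    induction n with
    | zero => simp
    | succ m ih => rw [Finset.sum_range_succ, ih]; push_cast; ring
  rw [Finset.sum_add_distrib, Finset.sum_add_distrib, Finset.sum_const,
    ← Finset.sum_mul, hgauss T] at hsum
  simp only [Finset.card_range, nsmul_eq_mul] at hsum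
  rw [htel]
  have hT1 : (1 : ℝ) ≤ (T : ℝ) := by exact_mod_cast hT
  nlinarith [hsum]
end

section
/- (Queue-backlog bound, deterministic core of Theorem 4, inequality (25).) Let Q : ℕ → ℝ with Q(0) = 0 and Q(τ) ≥ 0 for all τ, let η > 0, T ≥ 1, B ∈ ℝ, γ ∈ ℝ, and suppose that for every frame k ∈ {0, …, K−1}: (1/2)·Q((k+1)T)² − (1/2)·Q(kT)² ≤ B·T + V·T·γ − η·T·Q(kT), where V ≥ 0. Then (1/K)·∑_{k=0}^{K−1} Q(kT) ≤ B/η + V·γ/η. -/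
/-- Queue-backlog bound (deterministic core of Theorem 4, inequality (25)). -/
theorem queue_backlog_bound (Q : ℕ → ℝ) (V B γ η : ℝ) (T K : ℕ)
    (hQ0 : Q 0 = 0) (hQpos : ∀ τ, 0 ≤ Q τ)
    (hη : 0 < η) (hT : 1 ≤ T) (hK : 1 ≤ K) (hV : 0 ≤ V)
    (hframe : ∀ k < K,
      (1/2) * (Q ((k + 1) * T))^2 - (1/2) * (Q (k * T))^2 ≤
        B * T + V * T * γ - η * T * Q (k * T)) :
    (1 / (K : ℝ)) * ∑ k ∈ Finset.range K, Q (k * T) ≤ B / η + V * γ / η := by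
  have hKpos : (0:ℝ) < K := by exact_mod_cast hK
  have hTpos : (0:ℝ) < T := by exact_mod_cast hT
  set S := ∑ k ∈ Finset.range K, Q (k * T) with hS
  -- sum the frame inequalities
  have hsum : ∑ k ∈ Finset.range K,
      ((1/2) * (Q ((k + 1) * T))^2 - (1/2) * (Q (k * T))^2) ≤
      ∑ k ∈ Finset.range K, (B * T + V * T * γ - η * T * Q (k * T)) :=
    Finset.sum_le_sum fun k hk => hframe k (Finset.mem_range.mp hk)
  have htel : ∑ k ∈ Finset.range K,
      ((1/2) * (Q ((k + 1) * T))^2 - (1/2) * (Q (k * T))^2) =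
      (1/2) * (Q (K * T))^2 - (1/2) * (Q (0 * T))^2 :=
    Finset.sum_range_sub (fun k => (1/2) * (Q (k * T))^2) K
  have hLHS : (0:ℝ) ≤ ∑ k ∈ Finset.range K,
      ((1/2) * (Q ((k + 1) * T))^2 - (1/2) * (Q (k * T))^2) := by
    rw [htel]
    simp [hQ0]
    positivity
  have hRHS : ∑ k ∈ Finset.range K, (B * T + V * T * γ - η * T * Q (k * T))
      = K * (B * T + V * T * γ) - η * T * S := by
    rw [Finset.sum_sub_distrib, Finset.sum_const, Finset.card_range,
      ← Finset.mul_sum]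
    ring
  have key : η * T * S ≤ K * (B * T + V * T * γ) := by
    have := le_trans hLHS hsum
    rw [hRHS] at this
    linarith
  rw [← add_div, le_div_iff₀ hη, one_div, inv_mul_eq_div, div_mul_eq_mul_div,
    div_le_iff₀ hKpos]
  nlinarith [key, hTpos, hKpos]
end

section
/- (Cost bound, deterministic core of Theorem 4, inequality (26).) Let Q, C : ℕ → ℝ with Q(0) = 0, R_bug ∈ ℝ, and suppose Q(τ+1) = max(Q(τ) + C(τ) − R_bug, 0) for all τ. Let T ≥ 1, K ≥ 1, B ∈ ℝ, γ ∈ ℝ with B + V·γ ≥ 0 (V ≥ 0), and suppose that for every frame k ∈ {0, …, K−1}: (1/2)·Q((k+1)T)² − (1/2)·Q(kT)² ≤ B·T + V·T·γ. Then Q(KT) ≤ √(2·K·T·(B + V·γ)), and hence (1/(KT))·∑_{τ=0}^{KT−1} C(τ) ≤ R_bug + √(2·(B + V·γ)/(K·T)). -/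
/-!
Telescoping the per-frame drift bound over the `K` frames gives `Q(KT)² / 2 ≤ KT (B + Vγ)`,
which is the bound on the queue backlog. Since `Q(τ+1) ≥ Q(τ) + C(τ) - R_bug`, the excess cost
`∑_{τ < KT} (C(τ) - R_bug)` telescopes to at most `Q(KT) - Q(0) = Q(KT)`, and dividing by `KT`
turns the backlog bound into the time-average bound.
-/

open Finset

theorem sub_le_nsmul_of_forall_succ_sub_le {f : ℕ → ℝ} {c : ℝ} {n : ℕ}
    (h : ∀ k < n, f (k + 1) - f k ≤ c) : f n - f 0 ≤ n * c := by
  have := sum_le_card_nsmul (range n) (fun k => f (k + 1) - f k) c fun k hk => h k (mem_range.1 hk)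
  rwa [Finset.sum_range_sub, card_range, nsmul_eq_mul] at this

theorem sum_le_sub_of_forall_add_le_succ {Q a : ℕ → ℝ} (h : ∀ τ, Q τ + a τ ≤ Q (τ + 1)) (n : ℕ) :
    ∑ τ ∈ range n, a τ ≤ Q n - Q 0 := by
  rw [← Finset.sum_range_sub]
  exact sum_le_sum fun τ _ => by linarith [h τ]

theorem Real.sqrt_mul_div_self {n : ℝ} (hn : 0 < n) (y : ℝ) : √(n * y) / n = √(y / n) := by
  rw [show y / n = n * y / n ^ 2 by field_simp, Real.sqrt_div' _ (sq_nonneg n),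
    Real.sqrt_sq hn.le]

theorem cost_bound_general (Q C : ℕ → ℝ) (Rbug V B γ : ℝ) (T K : ℕ)
    (hQ0 : Q 0 = 0)
    (hQ : ∀ τ, Q (τ + 1) = max (Q τ + C τ - Rbug) 0)
    (hT : 1 ≤ T) (hK : 1 ≤ K)
    (hframe : ∀ k < K,
      (1/2) * (Q ((k + 1) * T))^2 - (1/2) * (Q (k * T))^2 ≤ B * T + V * T * γ) :
    Q (K * T) ≤ Real.sqrt (2 * K * T * (B + V * γ)) ∧
    (1 / ((K : ℝ) * T)) * ∑ τ ∈ Finset.range (K * T), C τ ≤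
      Rbug + Real.sqrt (2 * (B + V * γ) / ((K : ℝ) * T)) := by
  have hKT : (0 : ℝ) < K * T := by positivity
  have hbacklog : Q (K * T) ≤ √((K * T) * (2 * (B + V * γ))) := by
    have := sub_le_nsmul_of_forall_succ_sub_le (f := fun k => (1/2) * Q (k * T) ^ 2) hframe
    simp only [zero_mul, hQ0] at this
    exact (le_abs_self _).trans (Real.abs_le_sqrt (by linarith))
  refine ⟨by convert hbacklog using 2; ring, ?_⟩
  have hexcess : ∑ τ ∈ range (K * T), (C τ - Rbug) ≤ Q (K * T) := by
    have hstep (τ : ℕ) : Q τ + (C τ - Rbug) ≤ Q (τ + 1) := by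
      rw [hQ, ← add_sub_assoc]; exact le_max_left _ _
    simpa only [hQ0, sub_zero] using sum_le_sub_of_forall_add_le_succ hstep (K * T)
  rw [sum_sub_distrib, sum_const, card_range, nsmul_eq_mul] at hexcess
  push_cast at hexcess
  calc 1 / ((K : ℝ) * T) * ∑ τ ∈ range (K * T), C τ
      ≤ 1 / ((K : ℝ) * T) * ((K * T) * Rbug + √((K * T) * (2 * (B + V * γ)))) := by
        gcongr; linarith
    _ = Rbug + √(2 * (B + V * γ) / ((K : ℝ) * T)) := by
        rw [← Real.sqrt_mul_div_self hKT]; field_simp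

/-- Cost bound (deterministic core of Theorem 4, inequality (26)). -/
theorem cost_bound (Q C : ℕ → ℝ) (Rbug V B γ : ℝ) (T K : ℕ)
    (hQ0 : Q 0 = 0)
    (hQ : ∀ τ, Q (τ + 1) = max (Q τ + C τ - Rbug) 0)
    (hT : 1 ≤ T) (hK : 1 ≤ K) (hV : 0 ≤ V) (hBVγ : 0 ≤ B + V * γ)
    (hframe : ∀ k < K,
      (1/2) * (Q ((k + 1) * T))^2 - (1/2) * (Q (k * T))^2 ≤ B * T + V * T * γ) :
    Q (K * T) ≤ Real.sqrt (2 * K * T * (B + V * γ)) ∧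
    (1 / ((K : ℝ) * T)) * ∑ τ ∈ Finset.range (K * T), C τ ≤
      Rbug + Real.sqrt (2 * (B + V * γ) / ((K : ℝ) * T)) :=
  cost_bound_general Q C Rbug V B γ T K hQ0 hQ hT hK hframe
end
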